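/- Let P̄ ∈ ℝ^{k×k}, R ∈ ℝ^{d×d} be positive definite, H ∈ ℝ^{d×k}, x̄ ∈ ℝ^k, z ∈ ℝ^d, and h̄ ∈ ℝ^d (playing the role of h(x̄) in a nonlinear measurement model). Let H̃ be the rowwise concatenation of H and I_k, let z̃ = (z + H x̄ − h̄, x̄), and let R̃ = blockdiag(R, P̄). Then (H̃ᵀ R̃^{-1} H̃)^{-1} H̃ᵀ R̃^{-1} z̃ = x̄ + K (z − h̄), where K = P̄ Hᵀ (H P̄ Hᵀ + R)^{-1}. -/

import Mathlib

/-!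
Since `R̃` is block diagonal, the normal matrix is the information matrix
`A = Hᵀ R⁻¹ H + P̄⁻¹` and `H̃ᵀ R̃⁻¹ z̃ = Hᵀ R⁻¹ (z - h̄) + A x̄`, so the estimate is
`x̄ + A⁻¹ Hᵀ R⁻¹ (z - h̄)`. The push-through identity `A⁻¹ Hᵀ R⁻¹ = P̄ Hᵀ (H P̄ Hᵀ + R)⁻¹`,
obtained from `Hᵀ R⁻¹ (H P̄ Hᵀ + R) = A P̄ Hᵀ`, identifies this gain with `K`.
-/

open Matrix

namespace Matrix

section CommRing

variable {α : Type*} [CommRing α] {m n : Type*} [Fintype m] [Fintype n] [DecidableEq n]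

theorem transpose_fromRows_one_mul_fromBlocks (H : Matrix m n α) (A : Matrix m m α)
    (D : Matrix n n α) :
    (fromRows H (1 : Matrix n n α))ᵀ * fromBlocks A 0 0 D = fromCols (Hᵀ * A) D := by
  rw [transpose_fromRows, fromCols_mul_fromBlocks]
  simp

theorem inv_add_mulVec_mulVec_add_mulVec (B : Matrix n m α) (U : Matrix m n α)
    {C : Matrix n n α} (hA : IsUnit (B * U + C).det) (w : m → α) (x : n → α) :
    (B * U + C)⁻¹ *ᵥ (B *ᵥ (w + U *ᵥ x) + C *ᵥ x) = x + ((B * U + C)⁻¹ * B) *ᵥ w := by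
  have h : B *ᵥ (w + U *ᵥ x) + C *ᵥ x = B *ᵥ w + (B * U + C) *ᵥ x := by
    rw [mulVec_add, add_mulVec, mulVec_mulVec, add_assoc]
  rw [h, mulVec_add, mulVec_mulVec, mulVec_mulVec, nonsing_inv_mul _ hA, one_mulVec, add_comm]

variable [DecidableEq m]

theorem inv_fromBlocks_zero_zero {A : Matrix m m α} {D : Matrix n n α} (hA : IsUnit A.det)
    (hD : IsUnit D.det) : (fromBlocks A 0 0 D)⁻¹ = fromBlocks A⁻¹ 0 0 D⁻¹ := by
  rw [inv_fromBlocks_zero₂₁_of_isUnit_iff _ _ _ (by simp [isUnit_iff_isUnit_det, hA, hD])]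
  simp

theorem inv_mul_mul_inv_add_inv_push_through (U : Matrix m n α) (V : Matrix n m α)
    {P : Matrix n n α} {R : Matrix m m α} (hP : IsUnit P.det) (hR : IsUnit R.det)
    (hA : IsUnit (V * R⁻¹ * U + P⁻¹).det) (hS : IsUnit (U * P * V + R).det) :
    (V * R⁻¹ * U + P⁻¹)⁻¹ * (V * R⁻¹) = P * V * (U * P * V + R)⁻¹ := by
  have h : V * R⁻¹ * (U * P * V + R) = (V * R⁻¹ * U + P⁻¹) * (P * V) := by
    rw [Matrix.mul_add, Matrix.add_mul, nonsing_inv_mul_cancel_right _ _ hR,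
      ← Matrix.mul_assoc P⁻¹, nonsing_inv_mul _ hP, Matrix.one_mul]
    simp only [Matrix.mul_assoc]
  calc (V * R⁻¹ * U + P⁻¹)⁻¹ * (V * R⁻¹)
      = (V * R⁻¹ * U + P⁻¹)⁻¹ * (V * R⁻¹ * (U * P * V + R)) * (U * P * V + R)⁻¹ := by
        rw [Matrix.mul_assoc _ (V * R⁻¹ * _), mul_nonsing_inv_cancel_right _ _ hS]
    _ = P * V * (U * P * V + R)⁻¹ := by rw [h, nonsing_inv_mul_cancel_left _ _ hA]

end CommRing

section Real

variable {m n : Type*} [Fintype m] [Fintype n]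

theorem PosSemidef.mul_mul_transpose_add {P : Matrix n n ℝ} {R : Matrix m m ℝ}
    (hP : P.PosSemidef) (hR : R.PosDef) (H : Matrix m n ℝ) : (H * P * Hᵀ + R).PosDef :=
  PosDef.posSemidef_add (by
    simpa only [conjTranspose_eq_transpose_of_trivial] using hP.mul_mul_conjTranspose_same H) hR

theorem PosSemidef.transpose_mul_inv_mul_add_inv [DecidableEq m] [DecidableEq n]
    {P : Matrix n n ℝ} {R : Matrix m m ℝ} (hP : P.PosDef) (hR : R.PosSemidef)
    (H : Matrix m n ℝ) : (Hᵀ * R⁻¹ * H + P⁻¹).PosDef :=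
  PosDef.posSemidef_add (by
    simpa only [conjTranspose_eq_transpose_of_trivial] using hR.inv.conjTranspose_mul_mul_same H)
    hP.inv

end Real

end Matrix

theorem stmt4 {k d : ℕ} (P : Matrix (Fin k) (Fin k) ℝ) (R : Matrix (Fin d) (Fin d) ℝ)
    (hP : P.PosDef) (hR : R.PosDef) (H : Matrix (Fin d) (Fin k) ℝ)
    (xbar : Fin k → ℝ) (z hbar : Fin d → ℝ)
    (Htil : Matrix (Fin d ⊕ Fin k) (Fin k) ℝ) (hHtil : Htil = fromRows H 1)
    (ztil : Fin d ⊕ Fin k → ℝ) (hztil : ztil = Sum.elim (z + H *ᵥ xbar - hbar) xbar)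
    (Rtil : Matrix (Fin d ⊕ Fin k) (Fin d ⊕ Fin k) ℝ)
    (hRtil : Rtil = fromBlocks R 0 0 P)
    (K : Matrix (Fin k) (Fin d) ℝ) (hK : K = P * Hᵀ * (H * P * Hᵀ + R)⁻¹) :
    ((Htilᵀ * Rtil⁻¹ * Htil)⁻¹ * Htilᵀ * Rtil⁻¹) *ᵥ ztil
      = xbar + K *ᵥ (z - hbar) := by
  subst hHtil hztil hRtil hK
  have hPdet := hP.det_pos.ne'.isUnit
  have hRdet := hR.det_pos.ne'.isUnit
  have hA := (hR.posSemidef.transpose_mul_inv_mul_add_inv hP H).det_pos.ne'.isUnit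
  have hS := (hP.posSemidef.mul_mul_transpose_add hR H).det_pos.ne'.isUnit
  rw [inv_fromBlocks_zero_zero hRdet hPdet, Matrix.mul_assoc,
    transpose_fromRows_one_mul_fromBlocks, fromCols_mul_fromRows, Matrix.mul_one,
    ← mulVec_mulVec, fromCols_mulVec_sumElim, add_sub_right_comm,
    inv_add_mulVec_mulVec_add_mulVec _ _ hA,
    inv_mul_mul_inv_add_inv_push_through _ _ hPdet hRdet hA hS]
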